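/- For every δ with 0 < δ ≤ 1/3, and every measurable function f : ℝ² → ℝ satisfying 0 ≤ f(x) ≤ M for all x ∈ Δ, one has ∫_Δ (f − f·χ_{R_δ}) da db ≤ M·(3δ − (2 + 1/tan(π/8))·δ²); in particular the Lebesgue measure of Δ \ R_δ is at most 3δ − (2 + 1/tan(π/8))·δ². -/

import Mathlib

open MeasureTheory Real
open Set

noncomputable section

/-- The Farey triangle `Δ = {(a,b) : 0 < a ≤ 1, 0 < b ≤ 1, a + b > 1}`. -/
def FareyTriangle : Set (ℝ × ℝ) :=
  {p | 0 < p.1 ∧ p.1 ≤ 1 ∧ 0 < p.2 ∧ p.2 ≤ 1 ∧ 1 < p.1 + p.2}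

/-- The trimmed Farey triangle `R_δ = {(a,b) : 0 < a ≤ 1-δ, 0 < b ≤ 1-δ, a+b ≥ 1+δ}`,
obtained by trimming `δ` (in Euclidean distance) off each edge of `Δ`. -/
def trimmedTriangle (δ : ℝ) : Set (ℝ × ℝ) :=
  {p | 0 < p.1 ∧ p.1 ≤ 1 - δ ∧ 0 < p.2 ∧ p.2 ≤ 1 - δ ∧ 1 + δ ≤ p.1 + p.2}

lemma measurableSet_farey : MeasurableSet FareyTriangle := by
  have : FareyTriangle = (Prod.fst ⁻¹' Ioi 0) ∩ (Prod.fst ⁻¹' Iic 1) ∩ (Prod.snd ⁻¹' Ioi 0)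
      ∩ (Prod.snd ⁻¹' Iic 1) ∩ ((fun p : ℝ × ℝ => p.1 + p.2) ⁻¹' Ioi 1) := by
    ext p; simp [FareyTriangle, and_assoc]
  rw [this]
  exact ((((measurable_fst measurableSet_Ioi).inter (measurable_fst measurableSet_Iic)).inter
    (measurable_snd measurableSet_Ioi)).inter (measurable_snd measurableSet_Iic)).inter
    ((measurable_fst.add measurable_snd) measurableSet_Ioi)

lemma measurableSet_trimmed (δ : ℝ) : MeasurableSet (trimmedTriangle δ) := by
  have : trimmedTriangle δ = (Prod.fst ⁻¹' Ioi 0) ∩ (Prod.fst ⁻¹' Iic (1 - δ))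
      ∩ (Prod.snd ⁻¹' Ioi 0) ∩ (Prod.snd ⁻¹' Iic (1 - δ))
      ∩ ((fun p : ℝ × ℝ => p.1 + p.2) ⁻¹' Ici (1 + δ)) := by
    ext p; simp [trimmedTriangle, and_assoc]
  rw [this]
  exact ((((measurable_fst measurableSet_Ioi).inter (measurable_fst measurableSet_Iic)).inter
    (measurable_snd measurableSet_Ioi)).inter (measurable_snd measurableSet_Iic)).inter
    ((measurable_fst.add measurable_snd) measurableSet_Ici)

lemma volume_farey : volume FareyTriangle = ENNReal.ofReal (1 / 2) := by
  rw [MeasureTheory.Measure.volume_eq_prod, Measure.prod_apply measurableSet_farey]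
  have hslice : (fun a => volume (Prod.mk a ⁻¹' FareyTriangle))
      = (Ioc (0:ℝ) 1).indicator (fun a => ENNReal.ofReal a) := by
    funext a
    by_cases ha : a ∈ Ioc (0:ℝ) 1
    · have : Prod.mk a ⁻¹' FareyTriangle = Ioc (1 - a) 1 := by
        ext b
        simp only [FareyTriangle, mem_preimage, mem_setOf_eq, mem_Ioc]
        constructor
        · rintro ⟨_, _, _, hb1, hab⟩; exact ⟨by linarith, hb1⟩
        · rintro ⟨h1, h2⟩
          exact ⟨ha.1, ha.2, by nlinarith [ha.2], h2, by linarith⟩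
      rw [this, Set.indicator_of_mem ha, Real.volume_Ioc]
      ring_nf
    · have : Prod.mk a ⁻¹' FareyTriangle = ∅ := by
        ext b
        simp only [FareyTriangle, mem_preimage, mem_setOf_eq, mem_empty_iff_false, iff_false]
        rintro ⟨h1, h2, _⟩
        exact ha ⟨h1, h2⟩
      rw [this, Set.indicator_of_notMem ha, measure_empty]
  rw [hslice, lintegral_indicator measurableSet_Ioc]
  rw [← ofReal_integral_eq_lintegral_ofReal]
  · rw [← intervalIntegral.integral_of_le zero_le_one, integral_id]
    norm_num
  · exact (continuous_id.integrableOn_Ioc)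
  · exact (ae_restrict_iff' measurableSet_Ioc).2 (ae_of_all _ fun x hx => le_of_lt hx.1)

lemma volume_trimmed {δ : ℝ} (hδ : 0 < δ) (hδ' : δ ≤ 1 / 3) :
    volume (trimmedTriangle δ) = ENNReal.ofReal ((1 - 3 * δ) ^ 2 / 2) := by
  rw [MeasureTheory.Measure.volume_eq_prod, Measure.prod_apply (measurableSet_trimmed δ)]
  have hslice : (fun a => volume (Prod.mk a ⁻¹' trimmedTriangle δ))
      = (Ioc (0:ℝ) (1 - δ)).indicator (fun a => ENNReal.ofReal (max (a - 2 * δ) 0)) := by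
    funext a
    by_cases ha : a ∈ Ioc (0:ℝ) (1 - δ)
    · have : Prod.mk a ⁻¹' trimmedTriangle δ = Icc (1 + δ - a) (1 - δ) := by
        ext b
        simp only [trimmedTriangle, mem_preimage, mem_setOf_eq, mem_Icc]
        constructor
        · rintro ⟨_, _, _, hb1, hab⟩; exact ⟨by linarith, hb1⟩
        · rintro ⟨h1, h2⟩
          exact ⟨ha.1, ha.2, by nlinarith [ha.2], h2, by linarith⟩
      rw [this, Set.indicator_of_mem ha, Real.volume_Icc]
      have harith : 1 - δ - (1 + δ - a) = a - 2 * δ := by ring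
      rw [harith]
      rcases le_total (a - 2 * δ) 0 with h | h
      · rw [max_eq_right h, ENNReal.ofReal_of_nonpos h, ENNReal.ofReal_zero]
      · rw [max_eq_left h]
    · have : Prod.mk a ⁻¹' trimmedTriangle δ = ∅ := by
        ext b
        simp only [trimmedTriangle, mem_preimage, mem_setOf_eq, mem_empty_iff_false, iff_false]
        rintro ⟨h1, h2, _⟩
        exact ha ⟨h1, h2⟩
      rw [this, Set.indicator_of_notMem ha, measure_empty]
  rw [hslice, lintegral_indicator measurableSet_Ioc]
  rw [← ofReal_integral_eq_lintegral_ofReal]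
  · congr 1
    have h1 : (0:ℝ) ≤ 1 - δ := by linarith
    rw [← intervalIntegral.integral_of_le h1]
    have h2 : (0:ℝ) ≤ 2 * δ := by linarith
    have h3 : 2 * δ ≤ 1 - δ := by linarith
    rw [← intervalIntegral.integral_add_adjacent_intervals (a := 0) (b := 2 * δ) (c := 1 - δ)
      (f := fun a => max (a - 2 * δ) 0) ?_ ?_]
    · have e1 : (∫ x in (0:ℝ)..(2*δ), max (x - 2 * δ) 0) = ∫ x in (0:ℝ)..(2*δ), (0:ℝ) := by
        apply intervalIntegral.integral_congr
        intro x hx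
        rw [uIcc_of_le h2] at hx
        simp [max_eq_right (by linarith [hx.2] : x - 2*δ ≤ 0)]
      have e2 : (∫ x in (2*δ)..(1-δ), max (x - 2 * δ) 0)
          = ∫ x in (2*δ)..(1-δ), (x - 2 * δ) := by
        apply intervalIntegral.integral_congr
        intro x hx
        rw [uIcc_of_le h3] at hx
        exact max_eq_left (by linarith [hx.1])
      rw [e1, e2, intervalIntegral.integral_comp_sub_right (fun x => x) (2 * δ), integral_id,
        intervalIntegral.integral_const]
      simp only [smul_eq_mul]
      ring
    · exact (continuous_id.sub continuous_const).max continuous_const |>.intervalIntegrable _ _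
    · exact (continuous_id.sub continuous_const).max continuous_const |>.intervalIntegrable _ _
  · exact ((continuous_id.sub continuous_const).max continuous_const).integrableOn_Ioc
  · exact ae_of_all _ fun x => le_max_right _ _

lemma tan_pi_div_eight_ge : (2:ℝ) / 5 ≤ Real.tan (π / 8) := by
  rw [Real.tan_eq_sin_div_cos, Real.sin_pi_div_eight, Real.cos_pi_div_eight]
  have hs2 : Real.sqrt 2 ^ 2 = 2 := Real.sq_sqrt (by norm_num)
  have hs2' : (1:ℝ) ≤ Real.sqrt 2 := by nlinarith [Real.sqrt_nonneg 2]
  have hs2'' : Real.sqrt 2 ≤ 42 / 29 := by nlinarith [Real.sqrt_nonneg 2]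
  have hu : Real.sqrt (2 - Real.sqrt 2) ^ 2 = 2 - Real.sqrt 2 :=
    Real.sq_sqrt (by linarith)
  have hv : Real.sqrt (2 + Real.sqrt 2) ^ 2 = 2 + Real.sqrt 2 :=
    Real.sq_sqrt (by linarith)
  have hvpos : 0 < Real.sqrt (2 + Real.sqrt 2) := Real.sqrt_pos.2 (by linarith)
  have hupos : 0 ≤ Real.sqrt (2 - Real.sqrt 2) := Real.sqrt_nonneg _
  rw [div_le_div_iff₀ (by norm_num) (by positivity)]
  nlinarith [hu, hv, hvpos, hupos, hs2'', hs2',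
    mul_pos hvpos hvpos, mul_nonneg hupos hupos, mul_nonneg hupos hvpos.le]

/-- For `0 < δ ≤ 1/3` and any measurable `f` with `0 ≤ f ≤ M` on `Δ`,
`∫_Δ (f − f·χ_{R_δ}) ≤ M (3δ − (2 + 1/tan(π/8)) δ²)`; in particular the Lebesgue
measure of `Δ \ R_δ` is at most `3δ − (2 + 1/tan(π/8)) δ²`. -/
theorem trimmed_triangle_integral_bound (δ M : ℝ) (hδ : 0 < δ) (hδ' : δ ≤ 1 / 3)
    (f : ℝ × ℝ → ℝ) (hf : Measurable f) (hbd : ∀ x ∈ FareyTriangle, 0 ≤ f x ∧ f x ≤ M) :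
    (∫ p in FareyTriangle, (f p - Set.indicator (trimmedTriangle δ) f p)) ≤
      M * (3 * δ - (2 + 1 / Real.tan (π / 8)) * δ ^ 2) ∧
    (volume (FareyTriangle \ trimmedTriangle δ)).toReal ≤
      3 * δ - (2 + 1 / Real.tan (π / 8)) * δ ^ 2 := by
  have htanpos : (0:ℝ) < Real.tan (π / 8) := lt_of_lt_of_le (by norm_num) tan_pi_div_eight_ge
  have hinv : 1 / Real.tan (π / 8) ≤ 5 / 2 := by
    rw [div_le_iff₀ htanpos]
    nlinarith [tan_pi_div_eight_ge]
  have hRΔ : trimmedTriangle δ ⊆ FareyTriangle := by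
    rintro p ⟨h1, h2, h3, h4, h5⟩
    exact ⟨h1, by linarith, h3, by linarith, by linarith⟩
  have hvol : (volume (FareyTriangle \ trimmedTriangle δ)).toReal = 3 * δ - 9 / 2 * δ ^ 2 := by
    rw [measure_diff hRΔ (measurableSet_trimmed δ).nullMeasurableSet
        (by rw [volume_trimmed hδ hδ']; exact ENNReal.ofReal_ne_top),
      volume_farey, volume_trimmed hδ hδ', ← ENNReal.ofReal_sub _ (by positivity),
      ENNReal.toReal_ofReal (by nlinarith)]
    ring
  have hb2 : 3 * δ - 9 / 2 * δ ^ 2 ≤ 3 * δ - (2 + 1 / Real.tan (π / 8)) * δ ^ 2 := by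
    nlinarith [mul_le_mul_of_nonneg_right
      (by linarith : (2 + 1 / Real.tan (π / 8)) ≤ 9 / 2) (sq_nonneg δ)]
  have hvolbd : (volume (FareyTriangle \ trimmedTriangle δ)).toReal ≤
      3 * δ - (2 + 1 / Real.tan (π / 8)) * δ ^ 2 := by rw [hvol]; exact hb2
  refine ⟨?_, hvolbd⟩
  have h11 : ((1:ℝ), (1:ℝ)) ∈ FareyTriangle :=
    ⟨one_pos, le_refl 1, one_pos, le_refl 1, by norm_num⟩
  have hM0 : 0 ≤ M := le_trans (hbd _ h11).1 (hbd _ h11).2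
  have hmD : MeasurableSet (FareyTriangle \ trimmedTriangle δ) :=
    measurableSet_farey.diff (measurableSet_trimmed δ)
  have hfin : volume (FareyTriangle \ trimmedTriangle δ) ≠ ⊤ :=
    ne_top_of_le_ne_top (by rw [volume_farey]; exact ENNReal.ofReal_ne_top)
      (measure_mono diff_subset)
  have key : (fun p => f p - Set.indicator (trimmedTriangle δ) f p)
      = ((trimmedTriangle δ)ᶜ).indicator f := by
    funext p
    by_cases h : p ∈ trimmedTriangle δ <;> simp [Set.indicator_apply, h]
  have heq : (∫ p in FareyTriangle, (f p - Set.indicator (trimmedTriangle δ) f p))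
      = ∫ p in FareyTriangle \ trimmedTriangle δ, f p := by
    rw [key, setIntegral_indicator (measurableSet_trimmed δ).compl, ← Set.diff_eq]
  have hint : IntegrableOn f (FareyTriangle \ trimmedTriangle δ) :=
    Measure.integrableOn_of_bounded hfin hf.aestronglyMeasurable
      ((ae_restrict_iff' hmD).2 (ae_of_all _ fun x hx => by
        have h := hbd x hx.1
        rw [Real.norm_eq_abs, abs_le]
        exact ⟨by linarith [h.1], h.2⟩))
  rw [heq]
  calc (∫ p in FareyTriangle \ trimmedTriangle δ, f p)
      ≤ ∫ _ in FareyTriangle \ trimmedTriangle δ, M :=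
        setIntegral_mono_on hint (integrableOn_const hfin) hmD
          (fun x hx => (hbd x hx.1).2)
    _ = (volume (FareyTriangle \ trimmedTriangle δ)).toReal * M := by
        rw [setIntegral_const, smul_eq_mul]; rfl
    _ ≤ M * (3 * δ - (2 + 1 / Real.tan (π / 8)) * δ ^ 2) := by
        rw [mul_comm]
        exact mul_le_mul_of_nonneg_left hvolbd hM0
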